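/- For every binary vector a of length n (n even), there exists an index i ∈ [0,n] such that the vector obtained by complementing the first i bits of a is balanced (has Hamming weight exactly n/2). -/
import Mathlib


/-- Hamming weight of a boolean vector. -/
def bweight {n : ℕ} (a : Fin n → Bool) : ℕ :=
  (Finset.univ.filter (fun i : Fin n => a i = true)).card

/-- Discrete intermediate value theorem for ±1 steps. -/
lemma ivt_steps (g : ℕ → ℤ) : ∀ n, (∀ i < n, g (i+1) = g i + 1 ∨ g (i+1) = g i - 1) →
    g 0 ≤ 0 → 0 ≤ g n → ∃ i ≤ n, g i = 0 := by
  intro n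
  induction n with
  | zero => intro _ h0 hn; exact ⟨0, le_refl 0, le_antisymm h0 hn⟩
  | succ n ih =>
    intro hstep h0 hn
    by_cases h : 0 ≤ g n
    · obtain ⟨i, hi, hgi⟩ := ih (fun i hi => hstep i (by omega)) h0 h
      exact ⟨i, by omega, hgi⟩
    · push_neg at h
      have := hstep n (by omega)
      exact ⟨n+1, le_refl _, by omega⟩

/-- Knuth's balancing observation: for every binary vector of even length
`n`, complementing some prefix yields a balanced vector. -/
theorem knuth_balancing (n : ℕ) (hn : Even n) (a : Fin n → Bool) :
    ∃ i ≤ n, bweight (fun j : Fin n => if j.val < i then !(a j) else a j) = n / 2 := by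
  set f : ℕ → ℕ := fun i => bweight (fun j : Fin n => if j.val < i then !(a j) else a j)
    with hf
  have hstep : ∀ i, i < n → f (i+1) = f i + 1 ∨ f (i+1) + 1 = f i := by
    intro i hi
    have hset : (Finset.univ.filter
          (fun j : Fin n => (if j.val < i+1 then !(a j) else a j) = true)) =
        if a ⟨i, hi⟩ = true then
          (Finset.univ.filter
            (fun j : Fin n => (if j.val < i then !(a j) else a j) = true)).erase ⟨i, hi⟩
        else insert ⟨i, hi⟩ (Finset.univ.filter
            (fun j : Fin n => (if j.val < i then !(a j) else a j) = true)) := by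
      by_cases ha : a ⟨i, hi⟩ = true <;> simp only [ha, if_true, if_false, Bool.not_eq_true] <;>
        · ext j
          simp only [Finset.mem_filter, Finset.mem_univ, true_and, Finset.mem_erase,
            Finset.mem_insert]
          rcases lt_trichotomy j.val i with hj | hj | hj
          · have hne : j ≠ ⟨i, hi⟩ := by
              intro h; rw [h] at hj; exact absurd hj (lt_irrefl i)
            simp [hj, Nat.lt_succ_of_lt hj, hne]
          · have : j = ⟨i, hi⟩ := Fin.ext hj
            subst this
            simp [ha]
          · have hne : j ≠ ⟨i, hi⟩ := by
              intro h; rw [h] at hj; exact absurd hj (lt_irrefl i)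
            simp [Nat.not_lt.mpr (Nat.le_of_lt hj), Nat.not_lt.mpr (Nat.succ_le_of_lt hj), hne]
    simp only [hf, bweight]
    rw [hset]
    by_cases ha : a ⟨i, hi⟩ = true
    · right
      rw [if_pos ha]
      have hmem : (⟨i, hi⟩ : Fin n) ∈ Finset.univ.filter
          (fun j : Fin n => (if j.val < i then !(a j) else a j) = true) := by
        simp [ha]
      rw [Finset.card_erase_of_mem hmem]
      have := Finset.card_pos.mpr ⟨_, hmem⟩
      omega
    · left
      rw [if_neg ha]
      have hmem : (⟨i, hi⟩ : Fin n) ∉ Finset.univ.filter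
          (fun j : Fin n => (if j.val < i then !(a j) else a j) = true) := by
        simp [ha]
      rw [Finset.card_insert_of_notMem hmem]
  -- endpoints
  have hf0 : f 0 = bweight a := by
    simp [hf, bweight]
  have hfn : f n + bweight a = n := by
    simp only [hf, bweight]
    have h1 : Finset.univ.filter (fun j : Fin n => (if j.val < n then !(a j) else a j) = true)
        = Finset.univ.filter (fun j : Fin n => ¬ (a j = true)) :=
      Finset.filter_congr (fun j _ => by simp [j.isLt])
    rw [h1]
    have := Finset.card_filter_add_card_filter_not
      (p := fun j : Fin n => a j = true) (s := (Finset.univ : Finset (Fin n)))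
    simp only [Finset.card_univ, Fintype.card_fin] at this
    omega
  -- intermediate value argument
  obtain ⟨k, hk⟩ := hn
  have hn2 : n / 2 + n / 2 = n := by omega
  by_cases hw : bweight a ≤ n / 2
  · obtain ⟨i, hi, hgi⟩ := ivt_steps (fun i => (f i : ℤ) - (n / 2 : ℕ)) n
      (by intro i hi; rcases hstep i hi with h | h <;> [left; right] <;> simp <;> omega)
      (by simp [hf0]; omega) (by simp; omega)
    exact ⟨i, hi, show f i = n / 2 by omega⟩
  · obtain ⟨i, hi, hgi⟩ := ivt_steps (fun i => ((n / 2 : ℕ) : ℤ) - (f i : ℕ)) n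
      (by intro i hi; rcases hstep i hi with h | h <;> [right; left] <;> simp <;> omega)
      (by simp [hf0]; omega) (by simp; omega)
    exact ⟨i, hi, show f i = n / 2 by omega⟩
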